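/- (Noise variance added by GHS key switching with Q = q².) Let n ≥ 1 and let q > 0, t > 0 be real numbers, and V_e, V_s > 0. Let c_2, e, d_0, d_1, s be mutually independent random polynomials in R_n with independent identically distributed mean-zero coefficients of variances q²/12, V_e, t²q²/12, t²q²/12, and V_s respectively. Then for every 0 ≤ i ≤ n−1, Var( ( (1/q)·( t·c_2·e + d_0 + d_1·s ) )|_i ) = (t²/12) · ( n·V_e + 1 + n·V_s ), products computed in R_n. -/

import Mathlib

open MeasureTheory ProbabilityTheory Polynomial
open scoped NNReal ENNReal

/-- The polynomial in `ℝ[x]` of degree `< n` with coefficients `c 0, …, c (n-1)`;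
it is the canonical representative of an element of `R_n = ℝ[x]/(x^n+1)`. -/
noncomputable def polyOf (n : ℕ) (c : Fin n → ℝ) : Polynomial ℝ :=
  ∑ j : Fin n, Polynomial.C (c j) * Polynomial.X ^ (j : ℕ)

/-- The `i`-th coefficient of the unique representative of degree `< n` of
`p mod (x^n + 1)`, i.e. the `i`-th coefficient of the image of `p` in `R_n`. -/
noncomputable def redCoeff (n : ℕ) (p : Polynomial ℝ) (i : ℕ) : ℝ :=
  (p %ₘ (Polynomial.X ^ n + 1)).coeff i

/-!
Coefficient `i` of a product in `R_n` is the negacyclic convolution `∑ⱼ ±cⱼ e_{i-j}`, with the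
sign `-1` exactly when `j + (i - j)` wraps around past `n`, since `X ^ n = -1`. Its `n` terms are
uncorrelated: `cⱼ cₖ` has mean zero for `j ≠ k` and the vector `c` is independent of `e`, so its
variance is `n · Var(cⱼ) · Var(eₖ)`. The three summands of the noise are functions of disjoint
blocks of the five independent random polynomials, so their variances add, and the factor `1/q`
divides the total by `q²`.
-/

lemma monic_X_pow_add_one {n : ℕ} (hn : n ≠ 0) : (X ^ n + 1 : ℝ[X]).Monic :=
  monic_X_pow_add (by rw [degree_one]; exact_mod_cast Nat.pos_of_ne_zero hn)

lemma degree_X_pow_add_one {n : ℕ} (hn : n ≠ 0) : (X ^ n + 1 : ℝ[X]).degree = n := by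
  rw [← C_1]
  exact degree_X_pow_add_C (Nat.pos_of_ne_zero hn) 1

lemma redCoeff_add (n : ℕ) (p r : ℝ[X]) (i : ℕ) :
    redCoeff n (p + r) i = redCoeff n p i + redCoeff n r i := by
  simp only [redCoeff, add_modByMonic, coeff_add]

lemma redCoeff_C_mul (n : ℕ) (a : ℝ) (p : ℝ[X]) (i : ℕ) :
    redCoeff n (C a * p) i = a * redCoeff n p i := by
  simp only [redCoeff, ← smul_eq_C_mul, smul_modByMonic, coeff_smul, smul_eq_mul]

lemma redCoeff_sum (n : ℕ) {ι : Type*} (s : Finset ι) (f : ι → ℝ[X]) (i : ℕ) :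
    redCoeff n (∑ x ∈ s, f x) i = ∑ x ∈ s, redCoeff n (f x) i := by
  simp only [redCoeff, ← modByMonicHom_apply, map_sum, finsetSum_coeff]

lemma redCoeff_X_pow_of_lt {n m : ℕ} (hm : m < n) (i : ℕ) :
    redCoeff n (X ^ m) i = if i = m then 1 else 0 := by
  have hn : n ≠ 0 := by omega
  rw [redCoeff, (modByMonic_eq_self_iff (monic_X_pow_add_one hn)).2
    (by rw [degree_X_pow, degree_X_pow_add_one hn]; exact_mod_cast hm), coeff_X_pow]

lemma redCoeff_polyOf {n : ℕ} (c : Fin n → ℝ) (i : Fin n) : redCoeff n (polyOf n c) i = c i := by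
  simp only [polyOf, redCoeff_sum, redCoeff_C_mul, redCoeff_X_pow_of_lt (Fin.isLt _), Fin.val_inj,
    mul_ite, mul_one, mul_zero, Finset.sum_ite_eq, Finset.mem_univ, if_true]

lemma redCoeff_X_pow_add_self {n m : ℕ} (hm : m < n) (i : ℕ) :
    redCoeff n (X ^ (m + n)) i = -if i = m then 1 else 0 := by
  have hn : n ≠ 0 := by omega
  have hX : (X ^ (m + n) : ℝ[X]) = -X ^ m + (X ^ n + 1) * X ^ m := by ring
  have h0 : redCoeff n ((X ^ n + 1) * X ^ m) i = 0 := by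
    rw [redCoeff, self_mul_modByMonic (monic_X_pow_add_one hn), coeff_zero]
  rw [hX, redCoeff_add, h0, add_zero, redCoeff, neg_modByMonic, coeff_neg, ← redCoeff,
    redCoeff_X_pow_of_lt hm]

lemma redCoeff_X_pow_add {n : ℕ} [NeZero n] (j k i : Fin n) :
    redCoeff n (X ^ ((j : ℕ) + k)) i = if k = i - j then (if j ≤ i then 1 else -1) else 0 := by
  simp only [eq_sub_iff_add_eq']
  simp only [Fin.ext_iff, Fin.val_add_eq_ite, Fin.le_def]
  rcases lt_or_ge ((j : ℕ) + k) n with h | h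
  · rw [redCoeff_X_pow_of_lt h]
    split_ifs <;> (try norm_num) <;> omega
  · obtain ⟨m, hm, hjk⟩ : ∃ m < n, (j : ℕ) + k = m + n := ⟨j + k - n, by omega, by omega⟩
    rw [hjk, redCoeff_X_pow_add_self hm]
    split_ifs <;> (try norm_num) <;> omega

lemma redCoeff_polyOf_mul_polyOf {n : ℕ} [NeZero n] (c e : Fin n → ℝ) (i : Fin n) :
    redCoeff n (polyOf n c * polyOf n e) i
      = ∑ j, (if j ≤ i then 1 else -1) * (c j * e (i - j)) := by
  simp only [polyOf, Finset.sum_mul_sum, redCoeff_sum]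
  refine Finset.sum_congr rfl fun j _ => ?_
  simp only [show ∀ k : Fin n, C (c j) * X ^ (j : ℕ) * (C (e k) * X ^ (k : ℕ))
      = C (c j * e k) * X ^ ((j : ℕ) + k) from fun k => by rw [C_mul, pow_add]; ring,
    redCoeff_C_mul, redCoeff_X_pow_add, mul_ite, mul_zero, Finset.sum_ite_eq', Finset.mem_univ,
    if_true]
  split_ifs <;> ring

namespace ProbabilityTheory

variable {Ω : Type*} [MeasurableSpace Ω] {P : Measure Ω}

lemma IndepFun.memLp_two_mul {X Y : Ω → ℝ} (hXY : IndepFun X Y P) (hX : MemLp X 2 P)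
    (hY : MemLp Y 2 P) : MemLp (X * Y) 2 P := by
  rw [memLp_two_iff_integrable_sq (hX.1.mul hY.1)]
  simp only [Pi.mul_apply, mul_pow]
  exact (hXY.comp (measurable_id.pow_const 2) (measurable_id.pow_const 2)).integrable_mul
    hX.integrable_sq hY.integrable_sq

lemma covariance_mul_mul_of_indepFun [IsProbabilityMeasure P] {X X' Y Y' : Ω → ℝ}
    (h : IndepFun (fun ω => (X ω, X' ω)) (fun ω => (Y ω, Y' ω)) P) (hX0 : ∫ ω, X ω ∂P = 0)
    (hX : MemLp X 2 P) (hX' : MemLp X' 2 P) (hY : MemLp Y 2 P) (hY' : MemLp Y' 2 P) :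
    cov[fun ω => X ω * Y ω, fun ω => X' ω * Y' ω; P] = cov[X, X'; P] * ∫ ω, Y ω * Y' ω ∂P := by
  have hXY : IndepFun X Y P := h.comp measurable_fst measurable_fst
  have hXY' : IndepFun X' Y' P := h.comp measurable_snd measurable_snd
  have hmul : IndepFun (X * X') (Y * Y') P := h.comp measurable_mul measurable_mul
  rw [← Pi.mul_def, ← Pi.mul_def,
    covariance_eq_sub (hXY.memLp_two_mul hX hY) (hXY'.memLp_two_mul hX' hY'),
    covariance_eq_sub hX hX', hXY.integral_mul_eq_mul_integral hX.1 hY.1, hX0,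
    show X * Y * (X' * Y') = X * X' * (Y * Y') by ring,
    hmul.integral_mul_eq_mul_integral (hX.integrable_mul hX').1 (hY.integrable_mul hY').1]
  simp only [zero_mul, sub_zero, Pi.mul_apply]

lemma variance_add_add_of_indepFun [IsProbabilityMeasure P] {X Y Z : Ω → ℝ}
    (hX : MemLp X 2 P) (hY : MemLp Y 2 P) (hZ : MemLp Z 2 P)
    (hXY : IndepFun X Y P) (hXZ : IndepFun X Z P) (hYZ : IndepFun Y Z P) :
    Var[fun ω => X ω + Y ω + Z ω; P] = Var[X; P] + Var[Y; P] + Var[Z; P] := by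
  change Var[X + Y + Z; P] = _
  rw [variance_add (hX.add hY) hZ, covariance_add_left hX hY hZ, hXZ.covariance_eq_zero hX hZ,
    hYZ.covariance_eq_zero hY hZ, hXY.variance_add hX hY]
  ring

theorem variance_sum_mul_of_indepFun [IsProbabilityMeasure P] {ι : Type*} [Fintype ι]
    {u w : ι → Ω → ℝ} (a : ι → ℝ) (huw : IndepFun (fun ω j => u j ω) (fun ω j => w j ω) P)
    (hu : Pairwise fun j k => IndepFun (u j) (u k) P) (hu0 : ∀ j, ∫ ω, u j ω ∂P = 0)
    (huL : ∀ j, MemLp (u j) 2 P) (hwL : ∀ j, MemLp (w j) 2 P) :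
    Var[fun ω => ∑ j, a j * (u j ω * w j ω); P]
      = ∑ j, a j ^ 2 * (Var[u j; P] * ∫ ω, w j ω ^ 2 ∂P) := by
  classical
  have hterm : ∀ j, MemLp (fun ω => a j * (u j ω * w j ω)) 2 P := fun j =>
    ((huw.comp (measurable_pi_apply j) (measurable_pi_apply j)).memLp_two_mul
      (huL j) (hwL j)).const_mul (a j)
  have hcov : ∀ j k, cov[fun ω => a j * (u j ω * w j ω), fun ω => a k * (u k ω * w k ω); P]
      = if j = k then a j ^ 2 * (Var[u j; P] * ∫ ω, w j ω ^ 2 ∂P) else 0 := by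
    intro j k
    have hpair : ∀ j k, Measurable fun x : ι → ℝ => (x j, x k) := fun j k =>
      (measurable_pi_apply j).prodMk (measurable_pi_apply k)
    rw [covariance_const_mul_left, covariance_const_mul_right,
      covariance_mul_mul_of_indepFun (huw.comp (hpair j k) (hpair j k)) (hu0 j) (huL j) (huL k)
        (hwL j) (hwL k)]
    split_ifs with hjk
    · subst hjk
      simp only [covariance_self (huL j).aemeasurable, sq]
      ring
    · rw [(hu hjk).covariance_eq_zero (huL j) (huL k)]
      ring
  rw [variance_fun_sum hterm]
  simp only [hcov, Finset.sum_ite_eq, Finset.mem_univ, if_true]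

end ProbabilityTheory

section RandomPolynomial

variable {Ω : Type*} [MeasurableSpace Ω] {P : Measure Ω} {n : ℕ} [NeZero n]

lemma measurable_redCoeff_polyOf_mul_polyOf (i : Fin n) :
    Measurable fun x : (Fin n → ℝ) × (Fin n → ℝ) => redCoeff n (polyOf n x.1 * polyOf n x.2) i := by
  simp only [redCoeff_polyOf_mul_polyOf]
  fun_prop

lemma memLp_redCoeff_polyOf_mul_polyOf {c e : Fin n → Ω → ℝ}
    (hce : IndepFun (fun ω j => c j ω) (fun ω j => e j ω) P) (hc : ∀ j, MemLp (c j) 2 P)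
    (he : ∀ j, MemLp (e j) 2 P) (i : Fin n) :
    MemLp (fun ω => redCoeff n (polyOf n (fun j => c j ω) * polyOf n (fun j => e j ω)) i) 2 P := by
  simp only [redCoeff_polyOf_mul_polyOf]
  refine memLp_finsetSum _ fun j _ => MemLp.const_mul ?_ _
  exact (hce.comp (measurable_pi_apply j) (measurable_pi_apply (i - j))).memLp_two_mul
    (hc j) (he (i - j))

theorem variance_redCoeff_polyOf_mul_polyOf [IsProbabilityMeasure P] {c e : Fin n → Ω → ℝ}
    (hce : IndepFun (fun ω j => c j ω) (fun ω j => e j ω) P) (hc : iIndepFun c P)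
    (hc0 : ∀ j, ∫ ω, c j ω ∂P = 0) (he0 : ∀ j, ∫ ω, e j ω ∂P = 0)
    (hcL : ∀ j, MemLp (c j) 2 P) (heL : ∀ j, MemLp (e j) 2 P) {Vc Ve : ℝ}
    (hcvar : ∀ j, Var[c j; P] = Vc) (hevar : ∀ j, Var[e j; P] = Ve) (i : Fin n) :
    Var[fun ω => redCoeff n (polyOf n (fun j => c j ω) * polyOf n (fun j => e j ω)) i; P]
      = n * (Vc * Ve) := by
  have hshift : IndepFun (fun ω j => c j ω) (fun ω j => e (i - j) ω) P :=
    hce.comp measurable_id (measurable_pi_lambda _ fun j => measurable_pi_apply (i - j))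
  simp only [redCoeff_polyOf_mul_polyOf]
  rw [variance_sum_mul_of_indepFun _ hshift (fun j k h => hc.indepFun h) hc0 hcL
    fun j => heL (i - j)]
  have hsign : ∀ j : Fin n, (if j ≤ i then (1 : ℝ) else -1) ^ 2 = 1 := fun j => by
    split_ifs <;> norm_num
  simp only [hsign, one_mul, hcvar, ← variance_of_integral_eq_zero (heL _).aemeasurable (he0 _),
    hevar, Finset.sum_const, Finset.card_univ, Fintype.card_fin, nsmul_eq_mul]

end RandomPolynomial

theorem stmt16_general {Ω : Type*} [MeasurableSpace Ω] (P : Measure Ω) [IsProbabilityMeasure P]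
    (n : ℕ) (hn : 1 ≤ n) (q t : ℝ) (hq : 0 < q)
    (Ve Vs : ℝ)
    (c₂ e d₀ d₁ s : Fin n → Ω → ℝ)
    -- the five random polynomials are mutually independent
    (hindep : iIndepFun
      (![fun ω (j : Fin n) => c₂ j ω, fun ω j => e j ω, fun ω j => d₀ j ω,
         fun ω j => d₁ j ω, fun ω j => s j ω] : Fin 5 → Ω → Fin n → ℝ) P)
    -- each has independent identically distributed mean-zero square-integrable
    -- coefficients
    (hiid : ∀ f ∈ [c₂, e, d₀, d₁, s],
      iIndepFun f P ∧
      (∀ j j', Measure.map (f j) P = Measure.map (f j') P) ∧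
      (∀ j, (∫ ω, f j ω ∂P) = 0) ∧ (∀ j, MemLp (f j) 2 P))
    -- prescribed coefficient variances
    (hc₂var : ∀ j, variance (c₂ j) P = q ^ 2 / 12)
    (hevar : ∀ j, variance (e j) P = Ve)
    (hd₀var : ∀ j, variance (d₀ j) P = t ^ 2 * q ^ 2 / 12)
    (hd₁var : ∀ j, variance (d₁ j) P = t ^ 2 * q ^ 2 / 12)
    (hsvar : ∀ j, variance (s j) P = Vs)
    (i : Fin n) :
    variance (fun ω => redCoeff n
        (Polynomial.C (1 / q) *
          (Polynomial.C t * (polyOf n (fun j => c₂ j ω) * polyOf n (fun j => e j ω))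
            + polyOf n (fun j => d₀ j ω)
            + polyOf n (fun j => d₁ j ω) * polyOf n (fun j => s j ω))) i) P
      = (t ^ 2 / 12) * (n * Ve + 1 + n * Vs) := by
  have : NeZero n := ⟨by omega⟩
  obtain ⟨hc₂I, -, hc₂0, hc₂L⟩ := hiid c₂ (by simp)
  obtain ⟨-, -, he0, heL⟩ := hiid e (by simp)
  obtain ⟨-, -, -, hd₀L⟩ := hiid d₀ (by simp)
  obtain ⟨hd₁I, -, hd₁0, hd₁L⟩ := hiid d₁ (by simp)
  obtain ⟨-, -, hs0, hsL⟩ := hiid s (by simp)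
  set M := ![fun ω (j : Fin n) => c₂ j ω, fun ω j => e j ω, fun ω j => d₀ j ω,
    fun ω j => d₁ j ω, fun ω j => s j ω]
  have hM : ∀ k, AEMeasurable (M k) P := by
    intro k
    fin_cases k <;>
      exact aemeasurable_pi_lambda _ fun j => ((hiid _ (by simp)).2.2.2 j).aemeasurable
  have hφ := measurable_redCoeff_polyOf_mul_polyOf i
  have hce : IndepFun (fun ω j => c₂ j ω) (fun ω j => e j ω) P :=
    hindep.indepFun (i := 0) (j := 1) (by decide)
  have hd₁s : IndepFun (fun ω j => d₁ j ω) (fun ω j => s j ω) P :=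
    hindep.indepFun (i := 3) (j := 4) (by decide)
  set A : Ω → ℝ := fun ω =>
    t * redCoeff n (polyOf n (fun j => c₂ j ω) * polyOf n (fun j => e j ω)) i
  set C : Ω → ℝ := fun ω =>
    redCoeff n (polyOf n (fun j => d₁ j ω) * polyOf n (fun j => s j ω)) i
  have hAB : IndepFun A (d₀ i) P :=
    (hindep.indepFun_prodMk₀ hM 0 1 2 (by decide) (by decide)).comp (hφ.const_mul t)
      (measurable_pi_apply i)
  have hAC : IndepFun A C P := (hindep.indepFun_prodMk_prodMk₀ hM 0 1 3 4 (by decide)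
    (by decide) (by decide) (by decide)).comp (hφ.const_mul t) hφ
  have hBC : IndepFun (d₀ i) C P :=
    ((hindep.indepFun_prodMk₀ hM 3 4 2 (by decide) (by decide)).comp hφ
      (measurable_pi_apply i)).symm
  simp only [redCoeff_C_mul, redCoeff_add, redCoeff_polyOf]
  rw [variance_const_mul, variance_add_add_of_indepFun
      ((memLp_redCoeff_polyOf_mul_polyOf hce hc₂L heL i).const_mul t) (hd₀L i)
      (memLp_redCoeff_polyOf_mul_polyOf hd₁s hd₁L hsL i) hAB hAC hBC,
    variance_const_mul,
    variance_redCoeff_polyOf_mul_polyOf hce hc₂I hc₂0 he0 hc₂L heL hc₂var hevar,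
    variance_redCoeff_polyOf_mul_polyOf hd₁s hd₁I hd₁0 hs0 hd₁L hsL hd₁var hsvar, hd₀var]
  field_simp

/-- **noise variance added by GHS key switching with `Q = q²`.**
With `c₂, e, d₀, d₁, s` mutually independent random polynomials in `R_n` having
i.i.d. mean-zero coefficients of variances `q²/12, V_e, t²q²/12, t²q²/12, V_s`,
`Var(((1/q)·(t·c₂·e + d₀ + d₁·s))|_i) = (t²/12)·(n·V_e + 1 + n·V_s)`. -/
theorem stmt16 {Ω : Type*} [MeasurableSpace Ω] (P : Measure Ω) [IsProbabilityMeasure P]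
    (n : ℕ) (hn : 1 ≤ n) (q t : ℝ) (hq : 0 < q) (ht : 0 < t)
    (Ve Vs : ℝ) (hVe : 0 < Ve) (hVs : 0 < Vs)
    (c₂ e d₀ d₁ s : Fin n → Ω → ℝ)
    (hmeas : ∀ f ∈ [c₂, e, d₀, d₁, s], ∀ j, Measurable (f j))
    -- the five random polynomials are mutually independent
    (hindep : iIndepFun
      (![fun ω (j : Fin n) => c₂ j ω, fun ω j => e j ω, fun ω j => d₀ j ω,
         fun ω j => d₁ j ω, fun ω j => s j ω] : Fin 5 → Ω → Fin n → ℝ) P)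
    -- each has independent identically distributed mean-zero square-integrable
    -- coefficients
    (hiid : ∀ f ∈ [c₂, e, d₀, d₁, s],
      iIndepFun f P ∧
      (∀ j j', Measure.map (f j) P = Measure.map (f j') P) ∧
      (∀ j, (∫ ω, f j ω ∂P) = 0) ∧ (∀ j, MemLp (f j) 2 P))
    -- prescribed coefficient variances
    (hc₂var : ∀ j, variance (c₂ j) P = q ^ 2 / 12)
    (hevar : ∀ j, variance (e j) P = Ve)
    (hd₀var : ∀ j, variance (d₀ j) P = t ^ 2 * q ^ 2 / 12)
    (hd₁var : ∀ j, variance (d₁ j) P = t ^ 2 * q ^ 2 / 12)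
    (hsvar : ∀ j, variance (s j) P = Vs)
    (i : Fin n) :
    variance (fun ω => redCoeff n
        (Polynomial.C (1 / q) *
          (Polynomial.C t * (polyOf n (fun j => c₂ j ω) * polyOf n (fun j => e j ω))
            + polyOf n (fun j => d₀ j ω)
            + polyOf n (fun j => d₁ j ω) * polyOf n (fun j => s j ω))) i) P
      = (t ^ 2 / 12) * (n * Ve + 1 + n * Vs) :=
  stmt16_general P n hn q t hq Ve Vs c₂ e d₀ d₁ s hindep hiid hc₂var hevar hd₀var hd₁var hsvar i
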